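/- arXiv:math/9901142 — 4 statements merged into one kernel-verified Lean document; each statement's English description precedes it below -/
import Mathlib

section
/- The 1-form θ = (1/3)(t·df − 2f·dt − 3h·dφ) satisfies the pointwise norm bound |θ| ≤ (1/3)·r·g in the flat product metric on S¹ × ℝ³ (away from the z-axis), where r = (t² + ρ² + z²)^{1/2} and g = (x² + y² + 4z²)^{1/2}. -/
/-- `f = (x² + y² − 2z²)/2`. -/
noncomputable def fFun (p : Fin 4 → ℝ) : ℝ := ((p 1) ^ 2 + (p 2) ^ 2 - 2 * (p 3) ^ 2) / 2

/-- `h = z(x² + y²)`. -/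
def hFun (p : Fin 4 → ℝ) : ℝ := p 3 * ((p 1) ^ 2 + (p 2) ^ 2)

/-- Components of `dt`. -/
def dtForm : Fin 4 → ℝ := ![1, 0, 0, 0]

/-- Components of `dφ = (x dy − y dx)/(x² + y²)`, defined away from the z-axis. -/
noncomputable def dphiForm (p : Fin 4 → ℝ) : Fin 4 → ℝ :=
  ![0, -(p 2) / ((p 1) ^ 2 + (p 2) ^ 2), (p 1) / ((p 1) ^ 2 + (p 2) ^ 2), 0]

/-- Components of the 1-form `θ = (1/3)(t·df − 2f·dt − 3h·dφ)`. -/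
noncomputable def thetaForm (p : Fin 4 → ℝ) (i : Fin 4) : ℝ :=
  (1 / 3) * (p 0 * fderiv ℝ fFun p (Pi.single i 1) - 2 * fFun p * dtForm i
    - 3 * hFun p * dphiForm p i)

open ContinuousLinearMap in
lemma fderiv_fFun_apply (p v : Fin 4 → ℝ) :
    fderiv ℝ fFun p v = p 1 * v 1 + p 2 * v 2 - 2 * p 3 * v 3 := by
  have h1 : HasFDerivAt (fun q : Fin 4 → ℝ => q 1)
      (proj 1 : (Fin 4 → ℝ) →L[ℝ] ℝ) p := hasFDerivAt_apply 1 p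
  have h2 : HasFDerivAt (fun q : Fin 4 → ℝ => q 2)
      (proj 2 : (Fin 4 → ℝ) →L[ℝ] ℝ) p := hasFDerivAt_apply 2 p
  have h3 : HasFDerivAt (fun q : Fin 4 → ℝ => q 3)
      (proj 3 : (Fin 4 → ℝ) →L[ℝ] ℝ) p := hasFDerivAt_apply 3 p
  have hfun : fFun = fun y : Fin 4 → ℝ =>
      (1 / 2 : ℝ) * (y 1 * y 1 + y 2 * y 2 - 2 * (y 3 * y 3)) := by
    funext y; simp only [fFun]; ring
  rw [hfun,
    HasFDerivAt.fderiv (f := fun y : Fin 4 → ℝ =>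
        (1 / 2 : ℝ) * (y 1 * y 1 + y 2 * y 2 - 2 * (y 3 * y 3)))
      ((((h1.mul h1).add (h2.mul h2)).sub ((h3.mul h3).const_mul (2 : ℝ))).const_mul
      (1 / 2 : ℝ))]
  simp [ContinuousLinearMap.add_apply, ContinuousLinearMap.sub_apply,
    ContinuousLinearMap.smul_apply, ContinuousLinearMap.proj_apply, smul_eq_mul]
  ring

/-- Away from the z-axis, `|θ| ≤ (1/3)·r·g` in the flat product metric, where
`r = (t² + x² + y² + z²)^{1/2}` and `g = (x² + y² + 4z²)^{1/2}`. -/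
theorem theta_norm_bound :
    ∀ p : Fin 4 → ℝ, (p 1) ^ 2 + (p 2) ^ 2 ≠ 0 →
      Real.sqrt (∑ i : Fin 4, (thetaForm p i) ^ 2)
        ≤ (1 / 3) * Real.sqrt ((p 0) ^ 2 + (p 1) ^ 2 + (p 2) ^ 2 + (p 3) ^ 2)
            * Real.sqrt ((p 1) ^ 2 + (p 2) ^ 2 + 4 * (p 3) ^ 2) := by
  intro p hne
  set A := (p 0) ^ 2 + (p 1) ^ 2 + (p 2) ^ 2 + (p 3) ^ 2 with hA
  set B := (p 1) ^ 2 + (p 2) ^ 2 + 4 * (p 3) ^ 2 with hB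
  have hAnn : 0 ≤ A := by positivity
  have hBnn : 0 ≤ B := by positivity
  have e0 : thetaForm p 0 = (1 / 3) * (-(p 1 ^ 2 + p 2 ^ 2 - 2 * p 3 ^ 2)) := by
    simp only [thetaForm, fFun, hFun, dtForm, dphiForm, fderiv_fFun_apply, Pi.single_apply]
    simp
    ring
  have e1 : thetaForm p 1 = (1 / 3) * (p 0 * p 1 + 3 * p 3 * p 2) := by
    simp only [thetaForm, fFun, hFun, dtForm, dphiForm, fderiv_fFun_apply, Pi.single_apply]
    simp
    field_simp
    ring
  have e2 : thetaForm p 2 = (1 / 3) * (p 0 * p 2 - 3 * p 3 * p 1) := by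
    simp only [thetaForm, fFun, hFun, dtForm, dphiForm, fderiv_fFun_apply, Pi.single_apply]
    simp
    field_simp
  have e3 : thetaForm p 3 = (1 / 3) * (-2 * p 0 * p 3) := by
    simp only [thetaForm, fFun, hFun, dtForm, dphiForm, fderiv_fFun_apply, Pi.single_apply]
    simp
    ring
  have hsum : (∑ i : Fin 4, (thetaForm p i) ^ 2) = (1 / 9) * (A * B) := by
    rw [Fin.sum_univ_four, e0, e1, e2, e3, hA, hB]
    ring
  have : Real.sqrt (∑ i : Fin 4, (thetaForm p i) ^ 2)
      = (1 / 3) * Real.sqrt A * Real.sqrt B := by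
    rw [hsum, show (1 / 9 : ℝ) * (A * B) = ((1 / 3) * Real.sqrt A * Real.sqrt B) ^ 2 by
      rw [mul_pow, mul_pow, Real.sq_sqrt hAnn, Real.sq_sqrt hBnn]; ring,
      Real.sqrt_sq (by positivity)]
  rw [this]
end

section
/- Let u be a positive solution of u'' + (4/9)u − (2/9)c·u^{-2} = 0 with (9/4)(u')² + u² + c/u = 1 and c ∈ (0, 2/3^{3/2}]. Then u ≤ 1 and |u'| ≤ 2/3 everywhere; moreover if τ₀ is a point where u attains its maximum, then u(τ) ≥ 1/(2√3) for all τ with |τ − τ₀| ≤ √(3)/2. -/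
/-- A positive, normalized solution of `u'' + (4/9)u − (2/9)c·u⁻² = 0` with
`(9/4)(u')² + u² + c/u = 1` and `c ∈ (0, 2/3^{3/2}]` satisfies `u ≤ 1` and
`|u'| ≤ 2/3` everywhere; and if `u` attains its maximum at `τ₀`, then
`u(τ) ≥ 1/(2√3)` whenever `|τ − τ₀| ≤ √3/2`. -/
theorem solution_bounds (c : ℝ) (hc : 0 < c) (hc' : c ≤ 2 / (3 : ℝ) ^ ((3 : ℝ) / 2))
    (u u' u'' : ℝ → ℝ)
    (hpos : ∀ τ : ℝ, 0 < u τ)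
    (hd1 : ∀ τ : ℝ, HasDerivAt u (u' τ) τ)
    (hd2 : ∀ τ : ℝ, HasDerivAt u' (u'' τ) τ)
    (hode : ∀ τ : ℝ, u'' τ + (4 / 9) * u τ - (2 / 9) * c / (u τ) ^ 2 = 0)
    (hnorm : ∀ τ : ℝ, (9 / 4) * (u' τ) ^ 2 + (u τ) ^ 2 + c / u τ = 1) :
    (∀ τ : ℝ, u τ ≤ 1) ∧ (∀ τ : ℝ, |u' τ| ≤ 2 / 3)
    ∧ ∀ τ₀ : ℝ, (∀ τ : ℝ, u τ ≤ u τ₀) →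
        ∀ τ : ℝ, |τ - τ₀| ≤ Real.sqrt 3 / 2 → 1 / (2 * Real.sqrt 3) ≤ u τ := by
  have hU1 : ∀ τ : ℝ, u τ ≤ 1 := by
    intro τ
    have h := hnorm τ
    have hu := hpos τ
    have hcu : 0 < c / u τ := div_pos hc hu
    nlinarith [sq_nonneg (u' τ), sq_nonneg (u τ - 1)]
  have hU2 : ∀ τ : ℝ, |u' τ| ≤ 2 / 3 := by
    intro τ
    have h := hnorm τ
    have hcu : 0 < c / u τ := div_pos hc (hpos τ)
    rw [abs_le]
    constructor
    · nlinarith [sq_nonneg (u τ), sq_nonneg (u' τ + 2/3)]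
    · nlinarith [sq_nonneg (u τ), sq_nonneg (u' τ - 2/3)]
  refine ⟨hU1, hU2, ?_⟩
  intro τ₀ hmax τ hτ
  have hu0 := hpos τ₀
  -- derivative vanishes at the max
  have hloc : IsLocalMax u τ₀ := Filter.Eventually.of_forall hmax
  have h0 : u' τ₀ = 0 := hloc.hasDerivAt_eq_zero (hd1 τ₀)
  -- cubic relation at the max
  have hrel : (u τ₀) ^ 3 + c = u τ₀ := by
    have h := hnorm τ₀
    rw [h0] at h
    field_simp at h
    nlinarith [h]
  -- Claim A: c/2 ≤ u(τ₀)^3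
  have hA : c / 2 ≤ (u τ₀) ^ 3 := by
    by_contra hlt
    push_neg at hlt
    have hup : 0 < u'' τ₀ := by
      have h := hode τ₀
      have h2 : (4/9) * u τ₀ < (2/9) * c / (u τ₀) ^ 2 := by
        rw [lt_div_iff₀ (by positivity)]
        nlinarith
      linarith
    -- slope of u' is eventually positive to the right of τ₀
    have htend : Filter.Tendsto (slope u' τ₀) (nhdsWithin τ₀ (Set.Ioi τ₀)) (nhds (u'' τ₀)) :=
      (hasDerivAt_iff_tendsto_slope.mp (hd2 τ₀)).mono_left
        (nhdsWithin_mono _ (fun x hx => ne_of_gt hx))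
    have hev : ∀ᶠ x in nhdsWithin τ₀ (Set.Ioi τ₀), 0 < slope u' τ₀ x :=
      htend.eventually (eventually_gt_nhds hup)
    obtain ⟨a, ha, hsub⟩ := mem_nhdsGT_iff_exists_Ioc_subset.mp hev
    have ha' : τ₀ < a := ha
    have hmono : StrictMonoOn u (Set.Icc τ₀ a) := by
      apply strictMonoOn_of_deriv_pos (convex_Icc τ₀ a)
      · exact fun x _ => (hd1 x).continuousAt.continuousWithinAt
      · intro x hx
        rw [interior_Icc] at hx
        rw [(hd1 x).deriv]
        have hx' : x ∈ Set.Ioc τ₀ a := ⟨hx.1, le_of_lt hx.2⟩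
        have hs := hsub hx'
        have hxτ : 0 < x - τ₀ := sub_pos.mpr hx.1
        rw [Set.mem_setOf_eq, slope_def_field, h0, sub_zero] at hs
        have := mul_pos hs hxτ
        rwa [div_mul_cancel₀ _ (ne_of_gt hxτ)] at this
    have hlt2 : u τ₀ < u a :=
      hmono (Set.left_mem_Icc.mpr (le_of_lt ha')) (Set.right_mem_Icc.mpr (le_of_lt ha')) ha'
    exact absurd (hmax a) (not_le.mpr hlt2)
  -- hence u(τ₀) ≥ √3/3
  have hsq : 1/3 ≤ (u τ₀) ^ 2 := by nlinarith
  have hu0ge : Real.sqrt 3 / 3 ≤ u τ₀ := by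
    rw [div_le_iff₀ (by norm_num : (0:ℝ) < 3)]
    have h1 : Real.sqrt 3 ≤ Real.sqrt ((u τ₀ * 3) ^ 2) := Real.sqrt_le_sqrt (by nlinarith)
    rwa [Real.sqrt_sq (by positivity)] at h1
  -- quadratic lower bound: u τ ≥ u τ₀ - (2/9)(τ - τ₀)^2
  set G' : ℝ → ℝ := fun s => u' s + (4/9) * (s - τ₀) with hG'def
  set G : ℝ → ℝ := fun s => u s + (2/9) * (s - τ₀) ^ 2 with hGdef
  have hG'd : ∀ x : ℝ, HasDerivAt G' (u'' x + 4/9) x := by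
    intro x
    have h1 : HasDerivAt (fun s : ℝ => (4/9) * (s - τ₀)) ((4/9) * 1) x :=
      ((hasDerivAt_id x).sub_const τ₀).const_mul (4/9)
    have := (hd2 x).add h1
    rw [mul_one] at this; exact this
  have hGd : ∀ x : ℝ, HasDerivAt G (G' x) x := by
    intro x
    have h1 : HasDerivAt (fun s : ℝ => (2/9) * (s - τ₀) ^ 2)
        ((2/9) * ((2 : ℕ) * (x - τ₀) ^ 1 * 1)) x :=
      (((hasDerivAt_id x).sub_const τ₀).pow 2).const_mul (2/9)
    have h2 := (hd1 x).add h1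
    have : u' x + (2/9) * ((2 : ℕ) * (x - τ₀) ^ 1 * 1) = G' x := by
      simp [hG'def]; ring
    rwa [this] at h2
  have hG'mono : Monotone G' := by
    apply monotone_of_deriv_nonneg (fun x => (hG'd x).differentiableAt)
    intro x
    rw [(hG'd x).deriv]
    have h := hode x
    have hx1 := hU1 x
    have hxp := hpos x
    have hcu2 : 0 < (2/9) * c / (u x) ^ 2 := by positivity
    nlinarith
  have hG'0 : G' τ₀ = 0 := by simp [hG'def, h0]
  have key : u τ₀ ≤ G τ := by
    rcases le_total τ₀ τ with h | h
    · have hm : MonotoneOn G (Set.Ici τ₀) := by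
        apply monotoneOn_of_deriv_nonneg (convex_Ici τ₀)
          (fun x _ => (hGd x).continuousAt.continuousWithinAt)
          (fun x _ => (hGd x).differentiableAt.differentiableWithinAt)
        intro x hx
        rw [interior_Ici] at hx
        rw [(hGd x).deriv]
        have := hG'mono (le_of_lt hx)
        rw [hG'0] at this
        exact this
      have := hm (Set.self_mem_Ici) h h
      simpa [hGdef] using this
    · have hm : AntitoneOn G (Set.Iic τ₀) := by
        apply antitoneOn_of_deriv_nonpos (convex_Iic τ₀)
          (fun x _ => (hGd x).continuousAt.continuousWithinAt)
          (fun x _ => (hGd x).differentiableAt.differentiableWithinAt)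
        intro x hx
        rw [interior_Iic] at hx
        rw [(hGd x).deriv]
        have := hG'mono (le_of_lt hx)
        rw [hG'0] at this
        exact this
      have := hm h (Set.self_mem_Iic) h
      simpa [hGdef] using this
  -- (τ - τ₀)^2 ≤ 3/4
  have hsq2 : (τ - τ₀) ^ 2 ≤ 3/4 := by
    have h3 : (Real.sqrt 3 / 2) ^ 2 = 3/4 := by
      rw [div_pow, Real.sq_sqrt (by norm_num : (0:ℝ) ≤ 3)]; norm_num
    calc (τ - τ₀) ^ 2 = |τ - τ₀| ^ 2 := (sq_abs _).symm
      _ ≤ (Real.sqrt 3 / 2) ^ 2 := pow_le_pow_left₀ (abs_nonneg _) hτ 2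
      _ = 3/4 := h3
  have hs3 : (1:ℝ) ≤ Real.sqrt 3 := by
    rw [show (1:ℝ) = Real.sqrt 1 from (Real.sqrt_one).symm]
    exact Real.sqrt_le_sqrt (by norm_num)
  have h16 : 1 / (2 * Real.sqrt 3) = Real.sqrt 3 / 6 := by
    have hmul : Real.sqrt 3 * Real.sqrt 3 = 3 := Real.mul_self_sqrt (by norm_num)
    have hpos3 : (0:ℝ) < Real.sqrt 3 := by linarith
    field_simp
    linarith
  have hGτ : G τ = u τ + (2/9) * (τ - τ₀) ^ 2 := rfl
  rw [h16]
  have : u τ₀ ≤ u τ + (2/9) * (τ - τ₀) ^ 2 := by rw [← hGτ]; exact key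
  linarith
end

section
/- Let f : (0, s₀] → ℝ be continuous, non-negative, piecewise differentiable, and suppose there is a constant ζ ≥ 1 and δ > 0 such that f(r) ≤ ζ·(δ²·r²·s + r·f'(r)) for almost all r ∈ (0, s/4], where 0 < s ≤ s₀. Then f(r) ≤ 4^{1/ζ}·(r/s)^{1/ζ}·(f(s/4) + ζ·δ²·s³) for all r ∈ (0, s/4]. -/
/-- If `h` is continuous on `[a,b]` with nonnegative derivative off a finite set,
then `h a ≤ h b`. -/
private lemma mono_off_finite (S : Set ℝ) (hS : S.Finite) :
    ∀ h h' : ℝ → ℝ, ∀ a b : ℝ, a ≤ b →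
      ContinuousOn h (Set.Icc a b) →
      (∀ x ∈ Set.Ioo a b \ S, HasDerivAt h (h' x) x) →
      (∀ x ∈ Set.Ioo a b \ S, 0 ≤ h' x) →
      h a ≤ h b := by
  refine Set.Finite.induction_on
    (motive := fun S _ => ∀ h h' : ℝ → ℝ, ∀ a b : ℝ, a ≤ b →
      ContinuousOn h (Set.Icc a b) →
      (∀ x ∈ Set.Ioo a b \ S, HasDerivAt h (h' x) x) →
      (∀ x ∈ Set.Ioo a b \ S, 0 ≤ h' x) →
      h a ≤ h b) S hS ?_ ?_
  · intro h h' a b hab hc hd hd0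
    have hmono : MonotoneOn h (Set.Icc a b) := by
      apply monotoneOn_of_deriv_nonneg (convex_Icc a b) hc
      · rw [interior_Icc]
        intro x hx
        exact (hd x ⟨hx, Set.notMem_empty x⟩).differentiableAt.differentiableWithinAt
      · rw [interior_Icc]
        intro x hx
        rw [(hd x ⟨hx, Set.notMem_empty x⟩).deriv]
        exact hd0 x ⟨hx, Set.notMem_empty x⟩
    exact hmono ⟨le_rfl, hab⟩ ⟨hab, le_rfl⟩ hab
  · intro c S' hcS' hS' IH h h' a b hab hc hd hd0
    by_cases hcab : c ∈ Set.Ioo a b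
    · obtain ⟨hac, hcb⟩ := hcab
      have sub1 : Set.Ioo a c \ S' ⊆ Set.Ioo a b \ insert c S' := by
        rintro x ⟨⟨h1, h2⟩, h3⟩
        refine ⟨⟨h1, h2.trans hcb⟩, ?_⟩
        simp only [Set.mem_insert_iff, not_or]
        exact ⟨ne_of_lt h2, h3⟩
      have sub2 : Set.Ioo c b \ S' ⊆ Set.Ioo a b \ insert c S' := by
        rintro x ⟨⟨h1, h2⟩, h3⟩
        refine ⟨⟨hac.trans h1, h2⟩, ?_⟩
        simp only [Set.mem_insert_iff, not_or]
        exact ⟨(ne_of_lt h1).symm, h3⟩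
      have step1 : h a ≤ h c :=
        IH h h' a c hac.le (hc.mono (Set.Icc_subset_Icc le_rfl hcb.le))
          (fun x hx => hd x (sub1 hx)) (fun x hx => hd0 x (sub1 hx))
      have step2 : h c ≤ h b :=
        IH h h' c b hcb.le (hc.mono (Set.Icc_subset_Icc hac.le le_rfl))
          (fun x hx => hd x (sub2 hx)) (fun x hx => hd0 x (sub2 hx))
      exact step1.trans step2
    · have sub : Set.Ioo a b \ S' ⊆ Set.Ioo a b \ insert c S' := by
        rintro x ⟨h1, h2⟩
        refine ⟨h1, ?_⟩
        simp only [Set.mem_insert_iff, not_or]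
        exact ⟨fun e => hcab (e ▸ h1), h2⟩
      exact IH h h' a b hab hc (fun x hx => hd x (sub hx)) (fun x hx => hd0 x (sub hx))

/-- Integration of the differential inequality (7.37): if `f` is continuous,
nonnegative and piecewise differentiable on `(0, s₀]` with
`f(r) ≤ ζ(δ²r²s + r f'(r))` off a finite set in `(0, s/4]`, where `ζ ≥ 1`,
`δ > 0` and `0 < s ≤ s₀`, then
`f(r) ≤ 4^{1/ζ}(r/s)^{1/ζ}(f(s/4) + ζδ²s³)` for all `r ∈ (0, s/4]`. -/
theorem integrate_differential_inequality (s₀ s δ ζ : ℝ)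
    (hs₀ : 0 < s₀) (hs : 0 < s) (hss : s ≤ s₀) (hζ : 1 ≤ ζ) (hδ : 0 < δ)
    (f f' : ℝ → ℝ) (S : Set ℝ) (hS : S.Finite)
    (hcont : ContinuousOn f (Set.Ioc 0 s₀))
    (hnn : ∀ r ∈ Set.Ioc (0 : ℝ) s₀, 0 ≤ f r)
    (hderiv : ∀ r ∈ Set.Ioc (0 : ℝ) (s / 4) \ S, HasDerivAt f (f' r) r)
    (hineq : ∀ r ∈ Set.Ioc (0 : ℝ) (s / 4) \ S,
      f r ≤ ζ * (δ ^ 2 * r ^ 2 * s + r * f' r)) :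
    ∀ r ∈ Set.Ioc (0 : ℝ) (s / 4),
      f r ≤ (4 : ℝ) ^ (1 / ζ) * (r / s) ^ (1 / ζ) * (f (s / 4) + ζ * δ ^ 2 * s ^ 3) := by
  have hζ0 : (0 : ℝ) < ζ := lt_of_lt_of_le one_pos hζ
  set ι : ℝ := 1 / ζ with hι
  have hι0 : 0 < ι := by positivity
  have hι1 : ι ≤ 1 := by
    rw [hι, div_le_one hζ0]; exact hζ
  have h2ι : (1 : ℝ) ≤ 2 - ι := by linarith
  have h2ι0 : (0 : ℝ) < 2 - ι := by linarith
  set K : ℝ := δ ^ 2 * s / (2 - ι) with hK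
  have hK0 : 0 < K := by positivity
  set p : ℝ := s / 4 with hp
  have hp0 : 0 < p := by positivity
  have hps₀ : p ≤ s₀ := by rw [hp]; linarith
  -- the comparison function
  set h : ℝ → ℝ := fun x => f x * x ^ (-ι) + K * x ^ (2 - ι) with hh
  set h' : ℝ → ℝ := fun x =>
    (f' x * x ^ (-ι) + f x * (-ι * x ^ (-ι - 1))) + K * ((2 - ι) * x ^ (2 - ι - 1)) with hh'
  -- derivative of h off S
  have hder : ∀ x ∈ Set.Ioo (0 : ℝ) p \ S, HasDerivAt h (h' x) x := by
    rintro x ⟨hx, hxS⟩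
    have hx' : x ∈ Set.Ioc (0 : ℝ) p \ S := ⟨⟨hx.1, hx.2.le⟩, hxS⟩
    have hx0 : (0 : ℝ) < x := hx.1
    have d1 : HasDerivAt (fun y : ℝ => y ^ (-ι)) (-ι * x ^ (-ι - 1)) x :=
      Real.hasDerivAt_rpow_const (Or.inl hx0.ne')
    have d2 : HasDerivAt (fun y : ℝ => y ^ (2 - ι)) ((2 - ι) * x ^ (2 - ι - 1)) x :=
      Real.hasDerivAt_rpow_const (Or.inl hx0.ne')
    exact ((hderiv x hx').mul d1).add (d2.const_mul K)
  -- nonnegativity of h' off S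
  have hder0 : ∀ x ∈ Set.Ioo (0 : ℝ) p \ S, 0 ≤ h' x := by
    rintro x ⟨hx, hxS⟩
    have hx0 : (0 : ℝ) < x := hx.1
    have hu : (0 : ℝ) < x ^ (-ι) := Real.rpow_pos_of_pos hx0 _
    have hA : x ^ (-ι - 1) = x ^ (-ι) * x⁻¹ := by
      rw [show -ι - 1 = -ι + (-1) by ring, Real.rpow_add hx0, Real.rpow_neg_one]
    have hB : x ^ (2 - ι - 1) = x * x ^ (-ι) := by
      rw [show (2 : ℝ) - ι - 1 = 1 + (-ι) by ring, Real.rpow_add hx0, Real.rpow_one]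
    have hKrel : K * (2 - ι) = δ ^ 2 * s := by
      rw [hK]; field_simp
    have hineq' : f x ≤ ζ * (δ ^ 2 * x ^ 2 * s + x * f' x) :=
      hineq x ⟨⟨hx.1, hx.2.le⟩, hxS⟩
    have key : f x * x ^ (-ι) ≤ ζ * (δ ^ 2 * x ^ 2 * s + x * f' x) * x ^ (-ι) :=
      mul_le_mul_of_nonneg_right hineq' hu.le
    have hxinv : x * x⁻¹ = 1 := mul_inv_cancel₀ hx0.ne'
    have hζinv : ζ * ι = 1 := by rw [hι]; field_simp
    have expand : (ζ * x) * h' x =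
        ζ * x * f' x * x ^ (-ι) - (ζ * ι) * (x * x⁻¹) * (f x * x ^ (-ι))
        + (K * (2 - ι)) * ζ * x ^ 2 * x ^ (-ι) := by
      rw [hh']; simp only [hA, hB]; ring
    have hprod : 0 ≤ (ζ * x) * h' x := by
      rw [expand, hxinv, hζinv, hKrel]
      nlinarith [key, hu.le]
    have hζx : (0 : ℝ) < ζ * x := by positivity
    exact nonneg_of_mul_nonneg_right hprod hζx
  -- continuity of h on a subinterval
  intro r hr
  have hr0 : (0 : ℝ) < r := hr.1
  have hrp : r ≤ p := hr.2
  have hsub : Set.Icc r p ⊆ Set.Ioc 0 s₀ := fun x hx =>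
    ⟨lt_of_lt_of_le hr0 hx.1, hx.2.trans hps₀⟩
  have hcrp : ContinuousOn h (Set.Icc r p) := by
    apply ContinuousOn.add
    · apply ContinuousOn.mul (hcont.mono hsub)
      exact ContinuousOn.rpow_const continuousOn_id fun x hx =>
        Or.inl (ne_of_gt (lt_of_lt_of_le hr0 hx.1))
    · apply continuousOn_const.mul
      exact ContinuousOn.rpow_const continuousOn_id fun x hx =>
        Or.inl (ne_of_gt (lt_of_lt_of_le hr0 hx.1))
  have hsub2 : Set.Ioo r p \ S ⊆ Set.Ioo (0 : ℝ) p \ S := fun x hx =>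
    ⟨⟨lt_trans hr0 hx.1.1, hx.1.2⟩, hx.2⟩
  have hmono : h r ≤ h p :=
    mono_off_finite S hS h h' r p hrp hcrp
      (fun x hx => hder x (hsub2 hx)) (fun x hx => hder0 x (hsub2 hx))
  -- unfolding the conclusion
  have hrι : (0 : ℝ) < r ^ ι := Real.rpow_pos_of_pos hr0 _
  have e1 : r ^ (-ι) * r ^ ι = 1 := by
    rw [← Real.rpow_add hr0]; simp
  have e2 : p ^ (-ι) * r ^ ι = 4 ^ ι * (r / s) ^ ι := by
    rw [← Real.mul_rpow (by norm_num) (by positivity),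
      show (4 : ℝ) * (r / s) = r / p by rw [hp]; field_simp,
      Real.div_rpow hr0.le hp0.le, Real.rpow_neg hp0.le]
    ring
  have e3 : p ^ (2 - ι) = p ^ 2 * p ^ (-ι) := by
    rw [show (2 : ℝ) - ι = (2 : ℝ) + (-ι) by ring, Real.rpow_add hp0]
    norm_num [Real.rpow_two]
  have hfra : f r * r ^ (-ι) ≤ h r := by
    simp only [hh]
    have : 0 ≤ K * r ^ (2 - ι) := by positivity
    linarith
  have hfr : f r * (r ^ (-ι) * r ^ ι) ≤ h p * r ^ ι := by
    rw [← mul_assoc]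
    exact mul_le_mul_of_nonneg_right (hfra.trans hmono) hrι.le
  rw [e1, mul_one] at hfr
  have hhp : h p * r ^ ι = 4 ^ ι * (r / s) ^ ι * (f p + K * p ^ 2) := by
    simp only [hh]
    rw [e3]
    calc (f p * p ^ (-ι) + K * (p ^ 2 * p ^ (-ι))) * r ^ ι
        = f p * (p ^ (-ι) * r ^ ι) + K * p ^ 2 * (p ^ (-ι) * r ^ ι) := by ring
      _ = 4 ^ ι * (r / s) ^ ι * (f p + K * p ^ 2) := by rw [e2]; ring
  have hKp : K * p ^ 2 ≤ ζ * δ ^ 2 * s ^ 3 := by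
    rw [hK, hp, div_mul_eq_mul_div, div_le_iff₀ h2ι0]
    have h1 : 1 ≤ ζ * (2 - ι) := by nlinarith
    have h2 : (0 : ℝ) < δ ^ 2 * s ^ 3 := by positivity
    nlinarith [mul_le_mul_of_nonneg_left h1 h2.le]
  have hfac : (0 : ℝ) ≤ 4 ^ ι * (r / s) ^ ι := by positivity
  calc f r ≤ h p * r ^ ι := hfr
    _ = 4 ^ ι * (r / s) ^ ι * (f p + K * p ^ 2) := hhp
    _ ≤ 4 ^ ι * (r / s) ^ ι * (f p + ζ * δ ^ 2 * s ^ 3) := by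
        apply mul_le_mul_of_nonneg_left _ hfac
        linarith
    _ = 4 ^ (1 / ζ) * (r / s) ^ (1 / ζ) * (f (s / 4) + ζ * δ ^ 2 * s ^ 3) := by rw [hι, hp]
end

section
/- Let Ψ : Symⁿ(ℂ) → ℂⁿ be the map sending an unordered n-tuple {λ₁,…,λₙ} of complex numbers to the coefficients (a₁,…,aₙ) of the monic polynomial zⁿ + a₁z^{n−1} + ⋯ + aₙ whose roots are λ₁,…,λₙ. Then Ψ is a bijective continuous map, and its inverse is Hölder continuous: there exists ζ ≥ 1 (depending on n) such that for all a, a' ∈ ℂⁿ with |a|, |a'| ≤ 1, each root λ of the polynomial with coefficients a lies within distance ζ·|a − a'|^{1/ζ} of some root of the polynomial with coefficients a'. -/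
/-!
Taking roots inverts the coefficient map: a monic polynomial of degree `n` is determined by its
`n` lower coefficients, and over `ℂ` it is the product of the `X - r` over its roots.

For the Hölder bound, a root `λ` of the polynomial `p` with coefficients `a`, `‖a‖ ≤ 1`, has
`|λ| ≤ n`, so the polynomial `q` with coefficients `a'` satisfies
`|q(λ)| = |q(λ) - p(λ)| ≤ nⁿ ‖a - a'‖`. As `|q(λ)| = ∏ |λ - μᵢ|` over the roots `μᵢ` of `q`, the
nearest of them satisfies `|λ - μ|ⁿ ≤ nⁿ ‖a - a'‖`, so one may take `ζ = n`.
-/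

theorem le_mul_rpow_one_div_of_pow_le {d K D : ℝ} {n : ℕ} (hn : n ≠ 0) (hK : 0 ≤ K) (hD : 0 ≤ D)
    (h : d ^ n ≤ K ^ n * D) : d ≤ K * D ^ (1 / (n : ℝ)) := by
  refine le_of_pow_le_pow_left₀ hn (by positivity) ?_
  rwa [mul_pow, one_div, Real.rpow_inv_natCast_pow hD hn]

namespace Polynomial

section CommSemiring

variable {R : Type*} [CommSemiring R] {n : ℕ}

noncomputable def monicOfCoeffs (c : Fin n → R) : R[X] :=
  X ^ n + ∑ j : Fin n, C (c j) * X ^ (j : ℕ)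

theorem monic_monicOfCoeffs (c : Fin n → R) : (monicOfCoeffs c).Monic :=
  monic_X_pow_add (degree_sum_fin_lt c)

theorem natDegree_monicOfCoeffs [Nontrivial R] (c : Fin n → R) :
    (monicOfCoeffs c).natDegree = n := by
  rw [monicOfCoeffs, natDegree_add_eq_left_of_degree_lt, natDegree_X_pow]
  simpa only [degree_X_pow] using degree_sum_fin_lt c

theorem coeff_monicOfCoeffs (c : Fin n → R) (j : Fin n) :
    (monicOfCoeffs c).coeff j = c j := by
  simp [monicOfCoeffs, coeff_X_pow, coeff_C_mul, j.is_lt.ne, Fin.val_inj]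

theorem eval_monicOfCoeffs (c : Fin n → R) (x : R) :
    (monicOfCoeffs c).eval x = x ^ n + ∑ j : Fin n, c j * x ^ (j : ℕ) := by
  simp [monicOfCoeffs, eval_finsetSum]

theorem eval_monicOfCoeffs_comp_rev (c : Fin n → R) (x : R) :
    (monicOfCoeffs (c ∘ Fin.rev)).eval x = x ^ n + ∑ j : Fin n, c j * x ^ (n - 1 - (j : ℕ)) := by
  rw [eval_monicOfCoeffs, ← Equiv.sum_comp Fin.revPerm (fun j => c j * x ^ (n - 1 - (j : ℕ)))]
  congr 1
  refine Finset.sum_congr rfl fun j _ => ?_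
  simp only [Function.comp_apply, Fin.revPerm_apply, Fin.val_rev]
  congr 2
  omega

theorem monicOfCoeffs_coeff {p : R[X]} (hp : p.Monic) (hn : p.natDegree = n) :
    monicOfCoeffs (fun j : Fin n => p.coeff j) = p := by
  conv_rhs => rw [hp.as_sum, hn]
  rw [monicOfCoeffs, Fin.sum_univ_eq_sum_range (fun i => C (p.coeff i) * X ^ i)]

end CommSemiring

theorem bijective_coeff_prod_X_sub_C {k : Type*} [Field k] [IsAlgClosed k] (n : ℕ) :
    Function.Bijective
      (fun m : {m : Multiset k // Multiset.card m = n} =>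
        fun j : Fin n => ((m.1.map fun z => X - C z).prod).coeff (j : ℕ)) := by
  refine Function.bijective_iff_has_inverse.mpr
    ⟨fun c => ⟨(monicOfCoeffs c).roots, by
      rw [IsAlgClosed.card_roots_eq_natDegree, natDegree_monicOfCoeffs]⟩, ?_, ?_⟩
  · rintro ⟨m, rfl⟩
    have hmonic : (m.map fun z => X - C z).prod.Monic :=
      monic_multiset_prod_of_monic _ _ fun z _ => monic_X_sub_C z
    ext1
    dsimp only
    rw [monicOfCoeffs_coeff hmonic (natDegree_multiset_prod_X_sub_C_eq_card m),
      roots_multiset_prod_X_sub_C]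
  · intro c
    funext j
    dsimp only
    rw [prod_multiset_X_sub_C_of_monic_of_roots_card_eq (monic_monicOfCoeffs c)
      IsAlgClosed.card_roots_eq_natDegree, coeff_monicOfCoeffs]

section NormedField

variable {𝕜 : Type*} [NormedField 𝕜] {n : ℕ}

theorem norm_sum_mul_pow_le (c : Fin n → 𝕜) {x : 𝕜} {R : ℝ} (hR : 1 ≤ R) (hx : ‖x‖ ≤ R) :
    ‖∑ j : Fin n, c j * x ^ (j : ℕ)‖ ≤ n * ‖c‖ * R ^ (n - 1) := by
  calc ‖∑ j : Fin n, c j * x ^ (j : ℕ)‖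
      ≤ ∑ j : Fin n, ‖c j * x ^ (j : ℕ)‖ := norm_sum_le _ _
    _ ≤ ∑ _j : Fin n, ‖c‖ * R ^ (n - 1) := by
        refine Finset.sum_le_sum fun j _ => ?_
        rw [norm_mul, norm_pow]
        gcongr
        · exact norm_le_pi_norm c j
        · exact (pow_le_pow_left₀ (norm_nonneg x) hx _).trans (pow_le_pow_right₀ hR (by omega))
    _ = n * ‖c‖ * R ^ (n - 1) := by simp [mul_assoc]

theorem norm_le_of_isRoot_monicOfCoeffs (hn : 0 < n) {c : Fin n → 𝕜} (hc : ‖c‖ ≤ 1) {x : 𝕜}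
    (hx : (monicOfCoeffs c).IsRoot x) : ‖x‖ ≤ n := by
  by_contra! hlt
  have h1 : 1 ≤ ‖x‖ := le_trans (by exact_mod_cast hn) hlt.le
  rw [IsRoot.def, eval_monicOfCoeffs] at hx
  have hpow : ‖x‖ * ‖x‖ ^ (n - 1) ≤ n * ‖x‖ ^ (n - 1) :=
    calc ‖x‖ * ‖x‖ ^ (n - 1) = ‖∑ j : Fin n, c j * x ^ (j : ℕ)‖ := by
          rw [← pow_succ', Nat.sub_add_cancel hn, ← norm_pow, eq_neg_of_add_eq_zero_left hx,
            norm_neg]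
      _ ≤ n * ‖c‖ * ‖x‖ ^ (n - 1) := norm_sum_mul_pow_le c h1 le_rfl
      _ ≤ n * ‖x‖ ^ (n - 1) := by gcongr; exact mul_le_of_le_one_right (by positivity) hc
  exact hlt.not_ge (le_of_mul_le_mul_right hpow (by positivity))

theorem norm_eval_monicOfCoeffs_le {c : Fin n → 𝕜} {x : 𝕜} (hx : (monicOfCoeffs c).IsRoot x)
    (c' : Fin n → 𝕜) {R : ℝ} (hR : 1 ≤ R) (hxR : ‖x‖ ≤ R) :
    ‖(monicOfCoeffs c').eval x‖ ≤ n * ‖c' - c‖ * R ^ (n - 1) := by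
  have hdiff : (monicOfCoeffs c').eval x = ∑ j : Fin n, (c' - c) j * x ^ (j : ℕ) := by
    rw [← sub_zero ((monicOfCoeffs c').eval x), ← hx.eq_zero, eval_monicOfCoeffs,
      eval_monicOfCoeffs]
    simp [sub_mul]
  rw [hdiff]
  exact norm_sum_mul_pow_le _ hR hxR

theorem exists_isRoot_norm_sub_pow_natDegree_le [IsAlgClosed 𝕜] {q : 𝕜[X]} (hq : q.Monic)
    (hdeg : 0 < q.natDegree) (x : 𝕜) :
    ∃ μ, q.IsRoot μ ∧ ‖x - μ‖ ^ q.natDegree ≤ ‖q.eval x‖ := by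
  have hcard : Multiset.card q.roots = q.natDegree := IsAlgClosed.card_roots_eq_natDegree
  have hne : q.roots ≠ 0 := fun h => by simp [h] at hcard; omega
  obtain ⟨μ, hμ, hmin⟩ := Multiset.exists_min_image (fun r => ‖x - r‖₊) hne
  refine ⟨μ, isRoot_of_mem_roots hμ, ?_⟩
  have heval : ‖q.eval x‖₊ = (q.roots.map fun r => ‖x - r‖₊).prod := by
    conv_lhs => rw [← prod_multiset_X_sub_C_of_monic_of_roots_card_eq hq hcard]
    rw [eval_multiset_prod, ← nnnormHom_apply, map_multiset_prod, Multiset.map_map,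
      Multiset.map_map]
    simp
  have hnn : ‖x - μ‖₊ ^ q.natDegree ≤ ‖q.eval x‖₊ := by
    rw [heval, ← hcard, ← Multiset.card_map (fun r => ‖x - r‖₊)]
    refine Multiset.pow_card_le_prod fun y hy => ?_
    obtain ⟨r, hr, rfl⟩ := Multiset.mem_map.1 hy
    exact hmin r hr
  exact_mod_cast hnn

theorem exists_isRoot_monicOfCoeffs_norm_sub_le [IsAlgClosed 𝕜] (hn : 0 < n) {c : Fin n → 𝕜} (hc : ‖c‖ ≤ 1) (c' : Fin n → 𝕜) {x : 𝕜}
    (hx : (monicOfCoeffs c).IsRoot x) :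
    ∃ μ, (monicOfCoeffs c').IsRoot μ ∧ ‖x - μ‖ ≤ n * ‖c - c'‖ ^ (1 / (n : ℝ)) := by
  obtain ⟨μ, hμ, hclose⟩ := exists_isRoot_norm_sub_pow_natDegree_le (monic_monicOfCoeffs c')
    (by rwa [natDegree_monicOfCoeffs]) x
  rw [natDegree_monicOfCoeffs] at hclose
  have hn1 : (1 : ℝ) ≤ n := by exact_mod_cast hn
  have hpow : ‖x - μ‖ ^ n ≤ (n : ℝ) ^ n * ‖c - c'‖ :=
    calc ‖x - μ‖ ^ n ≤ ‖(monicOfCoeffs c').eval x‖ := hclose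
      _ ≤ n * ‖c' - c‖ * (n : ℝ) ^ (n - 1) :=
        norm_eval_monicOfCoeffs_le hx c' hn1 (norm_le_of_isRoot_monicOfCoeffs hn hc hx)
      _ = (n : ℝ) ^ n * ‖c - c'‖ := by
        rw [norm_sub_rev, mul_right_comm, ← pow_succ', Nat.sub_add_cancel hn]
  exact ⟨μ, hμ, le_mul_rpow_one_div_of_pow_le hn.ne' (Nat.cast_nonneg n) (norm_nonneg _) hpow⟩

end NormedField

end Polynomial

open Polynomial in
/-- The map `Ψ : Symⁿ(ℂ) → ℂⁿ` sending an unordered `n`-tuple of complex numbers to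
the coefficients of the monic polynomial with those roots is a bijection, and its
inverse is Hölder continuous: there is `ζ ≥ 1` (depending on `n`) such that for
coefficient vectors `a, a'` of norm at most `1`, every root of the monic polynomial
`zⁿ + a₁z^{n−1} + ⋯ + aₙ` lies within `ζ·‖a − a'‖^{1/ζ}` of some root of the
polynomial with coefficients `a'`. -/
theorem sym_coeff_bijective_and_holder (n : ℕ) :
    Function.Bijective
      (fun m : {m : Multiset ℂ // Multiset.card m = n} =>
        fun j : Fin n => ((m.1.map fun z => X - C z).prod).coeff (j : ℕ))
    ∧ ∃ ζ : ℝ, 1 ≤ ζ ∧ ∀ a a' : Fin n → ℂ, ‖a‖ ≤ 1 → ‖a'‖ ≤ 1 →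
        ∀ lam : ℂ, lam ^ n + ∑ j : Fin n, a j * lam ^ (n - 1 - (j : ℕ)) = 0 →
          ∃ mu : ℂ, (mu ^ n + ∑ j : Fin n, a' j * mu ^ (n - 1 - (j : ℕ)) = 0)
            ∧ ‖lam - mu‖ ≤ ζ * ‖a - a'‖ ^ (1 / ζ) := by
  refine ⟨bijective_coeff_prod_X_sub_C n, ?_⟩
  obtain rfl | hn := n.eq_zero_or_pos
  · exact ⟨1, le_rfl, fun a a' _ _ lam hlam => by simp at hlam⟩
  refine ⟨n, by exact_mod_cast hn, fun a a' ha _ lam hlam => ?_⟩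
  have hroot (b : Fin n → ℂ) (z : ℂ) : (monicOfCoeffs (b ∘ Fin.rev)).IsRoot z ↔
      z ^ n + ∑ j : Fin n, b j * z ^ (n - 1 - (j : ℕ)) = 0 := by
    rw [IsRoot.def, eval_monicOfCoeffs_comp_rev]
  obtain ⟨mu, hmu, hclose⟩ := exists_isRoot_monicOfCoeffs_norm_sub_le hn
    ((pi_norm_comp_le a Fin.rev).trans ha) (a' ∘ Fin.rev) ((hroot a lam).2 hlam)
  refine ⟨mu, (hroot a' mu).1 hmu, hclose.trans ?_⟩
  gcongr
  exact pi_norm_comp_le (a - a') Fin.rev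
end
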